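/- arXiv:2502.12014 — 5 statements merged into one kernel-verified Lean document; each statement's English description precedes it below -/
import Mathlib

section
/- Let k ≥ 2 be an integer and Θ > 0 a real number. Consider the equation w = ((Θw+1)/(w+Θ))^k for w > 0. Then w = 1 is always a solution; if 0 < Θ ≤ (k+1)/(k-1) then w = 1 is the unique positive solution, and if Θ > (k+1)/(k-1) then the equation has exactly three positive solutions. -/
open Finset in
private lemma factorG (k : ℕ) (hk : 2 ≤ k) (Θ t : ℝ) :
    t * (t ^ k + Θ) - (Θ * t ^ k + 1) =
      (t - 1) * (1 + t ^ k - (Θ - 1) * ∑ i ∈ range (k - 1), t ^ (i + 1)) := by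
  have h1 : (t - 1) * ∑ i ∈ range (k - 1), t ^ (i + 1) = t ^ k - t := by
    have h0 : ∑ i ∈ range (k - 1), t ^ (i + 1) = t * ∑ i ∈ range (k - 1), t ^ i := by
      rw [Finset.mul_sum]
      exact Finset.sum_congr rfl fun i _ => (pow_succ' t i)
    have h2 := geom_sum_mul t (k - 1)
    have h3 : t * t ^ (k - 1) = t ^ k := by rw [← pow_succ']; congr 1; omega
    rw [h0]; linear_combination t * h2 + h3
  linear_combination (Θ - 1) * h1

open Finset in
private lemma pairingG (k : ℕ) (hk : 2 ≤ k) (t : ℝ) (ht : 0 < t) (hne : t ≠ 1) :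
    2 * ∑ i ∈ range (k - 1), t ^ (i + 1) < ((k : ℝ) - 1) * (1 + t ^ k) := by
  have hrefl : ∑ i ∈ range (k - 1), t ^ (k - 1 - i) = ∑ i ∈ range (k - 1), t ^ (i + 1) := by
    rw [← Finset.sum_range_reflect (fun i => t ^ (i + 1)) (k - 1)]
    apply Finset.sum_congr rfl; intro i hi; simp only [mem_range] at hi; congr 1; omega
  have h2S : 2 * ∑ i ∈ range (k - 1), t ^ (i + 1)
      = ∑ i ∈ range (k - 1), (t ^ (i + 1) + t ^ (k - 1 - i)) := by
    rw [Finset.sum_add_distrib, hrefl]; ring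
  have hterm : ∀ i ∈ range (k - 1), t ^ (i + 1) + t ^ (k - 1 - i) < 1 + t ^ k := by
    intro i hi; simp only [mem_range] at hi
    have e : t ^ (i + 1) * t ^ (k - 1 - i) = t ^ k := by rw [← pow_add]; congr 1; omega
    have h01 : 0 < (t ^ (i + 1) - 1) * (t ^ (k - 1 - i) - 1) := by
      rcases lt_or_gt_of_ne hne with h | h
      · have a1 : t ^ (i + 1) < 1 := pow_lt_one₀ ht.le h (by omega)
        have a2 : t ^ (k - 1 - i) < 1 := pow_lt_one₀ ht.le h (by omega)
        nlinarith
      · have a1 : 1 < t ^ (i + 1) := one_lt_pow₀ h (by omega)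
        have a2 : 1 < t ^ (k - 1 - i) := one_lt_pow₀ h (by omega)
        nlinarith
    nlinarith [e]
  have hne' : (range (k - 1)).Nonempty := ⟨0, by simp; omega⟩
  calc 2 * ∑ i ∈ range (k - 1), t ^ (i + 1)
      = ∑ i ∈ range (k - 1), (t ^ (i + 1) + t ^ (k - 1 - i)) := h2S
    _ < ∑ _i ∈ range (k - 1), (1 + t ^ k) := Finset.sum_lt_sum_of_nonempty hne' hterm
    _ = ((k : ℝ) - 1) * (1 + t ^ k) := by
        rw [Finset.sum_const, card_range, nsmul_eq_mul]
        congr 1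
        push_cast [Nat.cast_sub (by omega : 1 ≤ k)]
        ring

open Finset in
private lemma Dident (k : ℕ) (hk : 2 ≤ k) (a b : ℝ) :
    (1 + b ^ k) * (∑ i ∈ range (k - 1), a ^ (i + 1))
      - (1 + a ^ k) * (∑ i ∈ range (k - 1), b ^ (i + 1))
    = ∑ i ∈ range (k - 1), ((a * b) ^ (k - 1 - i) - 1) * (b ^ (i + 1) - a ^ (i + 1)) := by
  have refl2 : ∑ i ∈ range (k - 1), (b ^ k * a ^ (i + 1) - a ^ k * b ^ (i + 1))
      = ∑ i ∈ range (k - 1), (a * b) ^ (k - 1 - i) * (b ^ (i + 1) - a ^ (i + 1)) := by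
    rw [← Finset.sum_range_reflect
      (fun i => (a * b) ^ (k - 1 - i) * (b ^ (i + 1) - a ^ (i + 1))) (k - 1)]
    apply Finset.sum_congr rfl; intro i hi; simp only [mem_range] at hi
    have e1 : k - 1 - (k - 1 - 1 - i) = i + 1 := by omega
    have e2 : (k - 1 - 1 - i) + 1 = k - 1 - i := by omega
    rw [e1, e2, mul_pow]
    have g1 : b ^ (i + 1) * b ^ (k - 1 - i) = b ^ k := by rw [← pow_add]; congr 1; omega
    have g2 : a ^ (i + 1) * a ^ (k - 1 - i) = a ^ k := by rw [← pow_add]; congr 1; omega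
    linear_combination (b ^ (i + 1)) * g2 - (a ^ (i + 1)) * g1
  calc (1 + b ^ k) * (∑ i ∈ range (k - 1), a ^ (i + 1))
        - (1 + a ^ k) * (∑ i ∈ range (k - 1), b ^ (i + 1))
      = ∑ i ∈ range (k - 1),
          ((a ^ (i + 1) - b ^ (i + 1)) + (b ^ k * a ^ (i + 1) - a ^ k * b ^ (i + 1))) := by
        rw [Finset.mul_sum, Finset.mul_sum, ← Finset.sum_sub_distrib]
        exact Finset.sum_congr rfl fun i _ => by ring
    _ = (∑ i ∈ range (k - 1), (a ^ (i + 1) - b ^ (i + 1)))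
        + ∑ i ∈ range (k - 1), (b ^ k * a ^ (i + 1) - a ^ k * b ^ (i + 1)) :=
        Finset.sum_add_distrib
    _ = (∑ i ∈ range (k - 1), (a ^ (i + 1) - b ^ (i + 1)))
        + ∑ i ∈ range (k - 1), (a * b) ^ (k - 1 - i) * (b ^ (i + 1) - a ^ (i + 1)) := by
        rw [refl2]
    _ = _ := by
        rw [← Finset.sum_add_distrib]
        exact Finset.sum_congr rfl fun i _ => by ring

open Finset in
private lemma mono_hi (k : ℕ) (hk : 2 ≤ k) (a b : ℝ) (ha : 1 ≤ a) (hab : a < b) :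
    0 < (1 + b ^ k) * (∑ i ∈ range (k - 1), a ^ (i + 1))
      - (1 + a ^ k) * (∑ i ∈ range (k - 1), b ^ (i + 1)) := by
  rw [Dident k hk a b]
  apply Finset.sum_pos _ ⟨0, by simp; omega⟩
  intro i hi; simp only [mem_range] at hi
  have hab1 : 1 < a * b := by nlinarith
  have h1 : 1 < (a * b) ^ (k - 1 - i) := one_lt_pow₀ hab1 (by omega)
  have h2 : a ^ (i + 1) < b ^ (i + 1) := pow_lt_pow_left₀ hab (by linarith) (by omega)
  nlinarith

open Finset in
private lemma mono_lo (k : ℕ) (hk : 2 ≤ k) (a b : ℝ) (ha : 0 < a) (hab : a < b) (hb : b ≤ 1) :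
    (1 + b ^ k) * (∑ i ∈ range (k - 1), a ^ (i + 1))
      - (1 + a ^ k) * (∑ i ∈ range (k - 1), b ^ (i + 1)) < 0 := by
  rw [Dident k hk a b]
  apply Finset.sum_neg _ ⟨0, by simp; omega⟩
  intro i hi
  simp only [mem_range] at hi
  have hab1 : a * b < 1 := by nlinarith
  have h1 : (a * b) ^ (k - 1 - i) < 1 := pow_lt_one₀ (mul_nonneg ha.le (ha.trans hab).le) hab1 (by omega)
  have h2 : a ^ (i + 1) < b ^ (i + 1) := pow_lt_pow_left₀ hab (by linarith) (by omega)
  nlinarith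

open Finset in
private lemma sol_iff (k : ℕ) (hk : 2 ≤ k) (Θ : ℝ) (hΘ : 0 < Θ) (w : ℝ) :
    (0 < w ∧ w = ((Θ * w + 1) / (w + Θ)) ^ k) ↔
      ∃ t : ℝ, (0 < t ∧
        (t - 1) * (1 + t ^ k - (Θ - 1) * ∑ i ∈ range (k - 1), t ^ (i + 1)) = 0) ∧ w = t ^ k := by
  constructor
  · rintro ⟨hw, he⟩
    have hden : 0 < w + Θ := by linarith
    refine ⟨(Θ * w + 1) / (w + Θ), ⟨by positivity, ?_⟩, he⟩
    set t := (Θ * w + 1) / (w + Θ) with htdef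
    have hts : t * (w + Θ) = Θ * w + 1 := div_mul_cancel₀ _ hden.ne'
    have heq : t * (t ^ k + Θ) = Θ * t ^ k + 1 := by rw [← he]; exact hts
    have := factorG k hk Θ t
    linarith [this, heq]
  · rintro ⟨t, ⟨ht, hft⟩, hw⟩
    have heq : t * (t ^ k + Θ) = Θ * t ^ k + 1 := by
      have := factorG k hk Θ t; linarith [this, hft]
    have hden : (0:ℝ) < t ^ k + Θ := by positivity
    have h2 : (Θ * t ^ k + 1) / (t ^ k + Θ) = t := by
      rw [eq_comm, eq_div_iff hden.ne']; linarith [heq]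
    refine ⟨by rw [hw]; positivity, ?_⟩
    rw [hw, h2]

open Finset in
private lemma exists_roots (k : ℕ) (hk : 2 ≤ k) (Θ : ℝ)
    (hΘb : ((k : ℝ) + 1) / ((k : ℝ) - 1) < Θ) :
    ∃ t1 t2 : ℝ, 0 < t1 ∧ t1 < 1 ∧ 1 < t2 ∧
      (1 + t1 ^ k - (Θ - 1) * ∑ i ∈ range (k - 1), t1 ^ (i + 1)) = 0 ∧
      (1 + t2 ^ k - (Θ - 1) * ∑ i ∈ range (k - 1), t2 ^ (i + 1)) = 0 := by
  set G : ℝ → ℝ := fun t => 1 + t ^ k - (Θ - 1) * ∑ i ∈ range (k - 1), t ^ (i + 1) with hGdef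
  have hkR : (1:ℝ) < (k : ℝ) - 1 + 1 := by
    have : (2:ℝ) ≤ (k : ℝ) := by exact_mod_cast hk
    linarith
  have hk1 : (0:ℝ) < (k : ℝ) - 1 := by linarith
  have hbig : 2 < (Θ - 1) * ((k : ℝ) - 1) := by
    have h := (div_lt_iff₀ hk1).mp hΘb
    nlinarith
  have hΘ1 : 1 < Θ := by nlinarith
  have hGc : Continuous G := by
    apply Continuous.sub (by fun_prop)
    exact continuous_const.mul (continuous_finset_sum _ fun i _ => continuous_pow _)
  have hG1 : G 1 < 0 := by
    have hS1 : ∑ _i ∈ range (k - 1), (1:ℝ) = ((k:ℝ) - 1) := by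
      simp only [Finset.sum_const, card_range, nsmul_eq_mul, mul_one]
      push_cast [Nat.cast_sub (by omega : 1 ≤ k)]; ring
    simp only [hGdef, one_pow]
    rw [hS1]
    nlinarith
  have hG0 : G 0 = 1 := by
    simp [hGdef, zero_pow (by omega : k ≠ 0), zero_pow (Nat.succ_ne_zero _)]
  -- root in (0,1)
  obtain ⟨t1, ht1mem, ht1⟩ :=
    intermediate_value_Ioo' (by norm_num : (0:ℝ) ≤ 1) hGc.continuousOn
      (show (0:ℝ) ∈ Set.Ioo (G 1) (G 0) by rw [hG0]; exact ⟨hG1, one_pos⟩)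
  -- root in (1, t₀)
  set t₀ : ℝ := (Θ - 1) * ((k : ℝ) - 1) + 1 with ht0def
  have ht01 : 1 < t₀ := by nlinarith
  have hGt0 : 0 < G t₀ := by
    have hSle : ∑ i ∈ range (k - 1), t₀ ^ (i + 1) ≤ ((k - 1 : ℕ) : ℝ) * t₀ ^ (k - 1) := by
      calc ∑ i ∈ range (k - 1), t₀ ^ (i + 1)
          ≤ ∑ _i ∈ range (k - 1), t₀ ^ (k - 1) := by
            apply Finset.sum_le_sum
            intro i hi; simp only [mem_range] at hi
            exact pow_le_pow_right₀ (by linarith) (by omega)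
        _ = ((k - 1 : ℕ) : ℝ) * t₀ ^ (k - 1) := by
            rw [Finset.sum_const, card_range, nsmul_eq_mul]
    have hpow : t₀ ^ (k - 1) * t₀ = t₀ ^ k := by rw [← pow_succ]; congr 1; omega
    have hposp : 0 < t₀ ^ (k - 1) := by positivity
    have hcast : ((k - 1 : ℕ) : ℝ) = (k : ℝ) - 1 := by
      push_cast [Nat.cast_sub (by omega : 1 ≤ k)]; ring
    simp only [hGdef]
    rw [hcast] at hSle
    nlinarith [hSle, hpow, hposp]
  obtain ⟨t2, ht2mem, ht2⟩ :=
    intermediate_value_Ioo (le_of_lt ht01) hGc.continuousOn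
      (show (0:ℝ) ∈ Set.Ioo (G 1) (G t₀) from ⟨hG1, hGt0⟩)
  exact ⟨t1, t2, ht1mem.1, ht1mem.2, ht2mem.1, ht1, ht2⟩

open Finset in
theorem stmt_0 (k : ℕ) (hk : 2 ≤ k) (Θ : ℝ) (hΘ : 0 < Θ) :
    (1 : ℝ) ∈ {w : ℝ | 0 < w ∧ w = ((Θ * w + 1) / (w + Θ)) ^ k} ∧
    (Θ ≤ ((k : ℝ) + 1) / ((k : ℝ) - 1) →
      {w : ℝ | 0 < w ∧ w = ((Θ * w + 1) / (w + Θ)) ^ k} = {1}) ∧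
    (((k : ℝ) + 1) / ((k : ℝ) - 1) < Θ →
      {w : ℝ | 0 < w ∧ w = ((Θ * w + 1) / (w + Θ)) ^ k}.ncard = 3) := by
  have hkR : (2:ℝ) ≤ (k : ℝ) := by exact_mod_cast hk
  have hk1 : (0:ℝ) < (k : ℝ) - 1 := by linarith
  have h1mem : (1:ℝ) ∈ {w : ℝ | 0 < w ∧ w = ((Θ * w + 1) / (w + Θ)) ^ k} := by
    refine ⟨one_pos, ?_⟩
    have h : (Θ * 1 + 1) / (1 + Θ) = 1 := by
      rw [mul_one, add_comm Θ 1, div_self (by linarith : (1:ℝ) + Θ ≠ 0)]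
    rw [h, one_pow]
  refine ⟨h1mem, ?_, ?_⟩
  · -- uniqueness case
    intro hΘb
    ext w
    simp only [Set.mem_setOf_eq, Set.mem_singleton_iff]
    constructor
    · intro hw
      rw [sol_iff k hk Θ hΘ w] at hw
      obtain ⟨t, ⟨ht, hft⟩, hw⟩ := hw
      have ht1 : t = 1 := by
        rcases mul_eq_zero.mp hft with h | h
        · exact sub_eq_zero.mp h
        · by_contra hne
          have hSpos : 0 < ∑ i ∈ range (k - 1), t ^ (i + 1) :=
            Finset.sum_pos (fun i _ => pow_pos ht _) ⟨0, by simp; omega⟩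
          have htk : 0 < t ^ k := pow_pos ht k
          by_cases hΘ1 : Θ ≤ 1
          · nlinarith
          · have hp := pairingG k hk t ht hne
            have h2 : Θ * ((k:ℝ) - 1) ≤ (k:ℝ) + 1 := (le_div_iff₀ hk1).mp hΘb
            nlinarith
      rw [ht1, one_pow] at hw
      exact hw
    · intro hw; rw [hw]; exact h1mem
  · -- three solutions case
    intro hΘb
    obtain ⟨t1, t2, ht1p, ht1l, ht2g, hg1, hg2⟩ := exists_roots k hk Θ hΘb
    have hset : {w : ℝ | 0 < w ∧ w = ((Θ * w + 1) / (w + Θ)) ^ k}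
        = {t1 ^ k, 1, t2 ^ k} := by
      ext w
      simp only [Set.mem_setOf_eq, Set.mem_insert_iff, Set.mem_singleton_iff]
      rw [sol_iff k hk Θ hΘ w]
      constructor
      · rintro ⟨t, ⟨ht, hft⟩, hw⟩
        rcases mul_eq_zero.mp hft with h | h
        · exact Or.inr (Or.inl (by rw [hw, sub_eq_zero.mp h, one_pow]))
        · rcases lt_trichotomy t 1 with hlt | heq | hgt
          · left
            have het : t = t1 := by
              rcases lt_trichotomy t t1 with h' | h' | h'
              · exfalso
                have hD := mono_lo k hk t t1 ht h' (le_of_lt ht1l)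
                have hD0 : (1 + t1 ^ k) * (∑ i ∈ range (k - 1), t ^ (i + 1))
                    - (1 + t ^ k) * (∑ i ∈ range (k - 1), t1 ^ (i + 1)) = 0 := by
                  linear_combination (∑ i ∈ range (k - 1), t ^ (i + 1)) * hg1
                    - (∑ i ∈ range (k - 1), t1 ^ (i + 1)) * h
                linarith
              · exact h'
              · exfalso
                have hD := mono_lo k hk t1 t ht1p h' (le_of_lt hlt)
                have hD0 : (1 + t ^ k) * (∑ i ∈ range (k - 1), t1 ^ (i + 1))
                    - (1 + t1 ^ k) * (∑ i ∈ range (k - 1), t ^ (i + 1)) = 0 := by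
                  linear_combination (∑ i ∈ range (k - 1), t1 ^ (i + 1)) * h
                    - (∑ i ∈ range (k - 1), t ^ (i + 1)) * hg1
                linarith
            rw [hw, het]
          · exact Or.inr (Or.inl (by rw [hw, heq, one_pow]))
          · right; right
            have het : t = t2 := by
              rcases lt_trichotomy t t2 with h' | h' | h'
              · exfalso
                have hD := mono_hi k hk t t2 (le_of_lt hgt) h'
                have hD0 : (1 + t2 ^ k) * (∑ i ∈ range (k - 1), t ^ (i + 1))
                    - (1 + t ^ k) * (∑ i ∈ range (k - 1), t2 ^ (i + 1)) = 0 := by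
                  linear_combination (∑ i ∈ range (k - 1), t ^ (i + 1)) * hg2
                    - (∑ i ∈ range (k - 1), t2 ^ (i + 1)) * h
                linarith
              · exact h'
              · exfalso
                have hD := mono_hi k hk t2 t (le_of_lt ht2g) h'
                have hD0 : (1 + t ^ k) * (∑ i ∈ range (k - 1), t2 ^ (i + 1))
                    - (1 + t2 ^ k) * (∑ i ∈ range (k - 1), t ^ (i + 1)) = 0 := by
                  linear_combination (∑ i ∈ range (k - 1), t2 ^ (i + 1)) * h
                    - (∑ i ∈ range (k - 1), t ^ (i + 1)) * hg2
                linarith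
            rw [hw, het]
      · rintro (h | h | h)
        · exact ⟨t1, ⟨ht1p, mul_eq_zero_of_right _ hg1⟩, h⟩
        · exact ⟨1, ⟨one_pos, by rw [sub_self, zero_mul]⟩, by rw [h, one_pow]⟩
        · exact ⟨t2, ⟨by linarith, mul_eq_zero_of_right _ hg2⟩, h⟩
    rw [hset]
    have e1 : t1 ^ k < 1 := pow_lt_one₀ ht1p.le ht1l (by omega)
    have e2 : 1 < t2 ^ k := one_lt_pow₀ ht2g (by omega)
    exact Set.ncard_eq_three.mpr
      ⟨t1 ^ k, 1, t2 ^ k, by linarith, by linarith, by linarith, rfl⟩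
end

section
/- Let k ≥ 2 and Θ > 1 be real with Θ ≤ (k+1)/(k-1). Then the polynomial equation u^{k+1} - Θ u^k + Θ u - 1 = 0 has u = 1 as its unique positive root. -/
open Finset

lemma pair_lt (u : ℝ) (hu : 0 < u) (hne : u ≠ 1) (a b : ℕ) (ha : a ≠ 0) (hb : b ≠ 0) :
    u ^ a + u ^ b < 1 + u ^ (a + b) := by
  have key : (u ^ a - 1) * (u ^ b - 1) > 0 := by
    rcases lt_or_gt_of_ne hne with h | h
    · have h1 : u ^ a < 1 := pow_lt_one₀ hu.le h ha
      have h2 : u ^ b < 1 := pow_lt_one₀ hu.le h hb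
      exact mul_pos_of_neg_of_neg (by linarith) (by linarith)
    · have h1 : 1 < u ^ a := one_lt_pow₀ h ha
      have h2 : 1 < u ^ b := one_lt_pow₀ h hb
      exact mul_pos (by linarith) (by linarith)
  have hab : u ^ (a + b) = u ^ a * u ^ b := pow_add u a b
  nlinarith [key]

lemma sum_lt (u : ℝ) (hu : 0 < u) (hne : u ≠ 1) (n : ℕ) (hn : 1 ≤ n) :
    2 * ∑ i ∈ range n, u ^ (i + 1) < n * (1 + u ^ (n + 1)) := by
  have hrefl : ∑ i ∈ range n, u ^ (i + 1) = ∑ i ∈ range n, u ^ (n - i) := by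
    rw [← Finset.sum_range_reflect]
    apply Finset.sum_congr rfl
    intro i hi
    rw [Finset.mem_range] at hi
    congr 1
    omega
  have h2 : 2 * ∑ i ∈ range n, u ^ (i + 1)
      = ∑ i ∈ range n, (u ^ (i + 1) + u ^ (n - i)) := by
    rw [Finset.sum_add_distrib, ← hrefl]; ring
  rw [h2]
  have hbound : ∀ i ∈ range n, u ^ (i + 1) + u ^ (n - i) < 1 + u ^ (n + 1) := by
    intro i hi
    rw [Finset.mem_range] at hi
    have h := pair_lt u hu hne (i + 1) (n - i) (by omega) (by omega)
    have : (i + 1) + (n - i) = n + 1 := by omega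
    rwa [this] at h
  calc ∑ i ∈ range n, (u ^ (i + 1) + u ^ (n - i))
      < ∑ _i ∈ range n, (1 + u ^ (n + 1)) := by
        apply Finset.sum_lt_sum_of_nonempty ⟨0, Finset.mem_range.mpr (by omega)⟩ hbound
    _ = n * (1 + u ^ (n + 1)) := by rw [Finset.sum_const, card_range, nsmul_eq_mul]

theorem stmt_1 (k : ℕ) (hk : 2 ≤ k) (Θ : ℝ) (h1 : 1 < Θ)
    (h2 : Θ ≤ ((k : ℝ) + 1) / ((k : ℝ) - 1)) :
    {u : ℝ | 0 < u ∧ u ^ (k + 1) - Θ * u ^ k + Θ * u - 1 = 0} = {1} := by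
  obtain ⟨n, rfl⟩ : ∃ n, k = n + 1 := ⟨k - 1, by omega⟩
  have hn : 1 ≤ n := by omega
  ext u
  simp only [Set.mem_setOf_eq, Set.mem_singleton_iff]
  constructor
  · rintro ⟨hu, heq⟩
    by_contra hne
    set S : ℝ := ∑ i ∈ range n, u ^ (i + 1) with hS
    set T : ℝ := ∑ i ∈ range (n + 1 + 1), u ^ i with hT
    have hTmul : T * (u - 1) = u ^ (n + 1 + 1) - 1 := geom_sum_mul u (n + 1 + 1)
    have hSmul : S * (u - 1) = u ^ (n + 1) - u := by
      have : S = (∑ i ∈ range n, u ^ i) * u := by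
        rw [Finset.sum_mul]
        exact Finset.sum_congr rfl fun i _ => (pow_succ u i).symm
      rw [this]
      have := geom_sum_mul u n
      calc (∑ i ∈ range n, u ^ i) * u * (u - 1)
          = (∑ i ∈ range n, u ^ i) * (u - 1) * u := by ring
        _ = (u ^ n - 1) * u := by rw [this]
        _ = u ^ (n + 1) - u := by rw [pow_succ]; ring
    have hfact : (T - Θ * S) * (u - 1) = u ^ (n + 1 + 1) - Θ * u ^ (n + 1) + Θ * u - 1 := by
      have : (T - Θ * S) * (u - 1) = T * (u - 1) - Θ * (S * (u - 1)) := by ring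
      rw [this, hTmul, hSmul]; ring
    have hzero : (T - Θ * S) * (u - 1) = 0 := by rw [hfact, heq]
    have hune : u - 1 ≠ 0 := sub_ne_zero.mpr hne
    have hTS : T - Θ * S = 0 := by
      rcases mul_eq_zero.mp hzero with h | h
      · exact h
      · exact absurd h hune
    -- Now show T - Θ * S > 0, contradiction
    have hTdecomp : T = 1 + u ^ (n + 1) + S := by
      rw [hT, Finset.sum_range_succ, Finset.sum_range_succ']
      simp [hS]
      ring
    have hsum : 2 * S < n * (1 + u ^ (n + 1)) := sum_lt u hu hne n hn
    have hΘn : (Θ - 1) * n ≤ 2 := by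
      have hk1 : (0 : ℝ) < (n : ℝ) := by positivity
      have : ((n + 1 : ℕ) : ℝ) - 1 = (n : ℝ) := by push_cast; ring
      rw [this] at h2
      have h3 : Θ * n ≤ (n : ℝ) + 1 + 1 := by
        have := (le_div_iff₀ hk1).mp h2
        push_cast at this ⊢
        nlinarith
      nlinarith
    have hpos : 0 < 1 + u ^ (n + 1) := by positivity
    have hΘ1 : 0 < Θ - 1 := by linarith
    have hkey : (Θ - 1) * S < 1 + u ^ (n + 1) := by
      nlinarith [mul_lt_mul_of_pos_left hsum hΘ1,
        mul_le_mul_of_nonneg_right hΘn hpos.le]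
    have : T - Θ * S > 0 := by rw [hTdecomp]; nlinarith
    linarith [hTS, this]
  · rintro rfl
    exact ⟨one_pos, by ring⟩
end

section
/- Let k ≥ 2, q ≥ 2 be integers, θ > 0, and 1 ≤ m₁ ≤ q-1. If (u,v,w) with u,v,w > 0 satisfies the system u = (((θ+m-1)u+(θ^{-1}+m-1)v+(q-m)w+(q-m))/(mu+mv+(θ^{-1}+q-m-1)w+θ+q-m-1))^k, v = (((θ^{-1}+m-1)u+(θ+m-1)v+(q-m)w+(q-m))/(mu+mv+(θ^{-1}+q-m-1)w+θ+q-m-1))^k, w = ((mu+mv+(θ+q-m-1)w+(θ^{-1}+q-m-1))/(mu+mv+(θ^{-1}+q-m-1)w+θ+q-m-1))^k with m = m₁, then (1/u, w/u, v/u) satisfies the same system with m = q - m₁. -/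
/-- The fixed point system (for the coupled Ising-Potts model on the Cayley tree of
order `k`) with parameters `q`, `θ`, `m` in unknowns `(u, v, w)`. -/
def IsingPottsSystem (k : ℕ) (q θ m u v w : ℝ) : Prop :=
  u = (((θ + m - 1) * u + (θ⁻¹ + m - 1) * v + (q - m) * w + (q - m)) /
      (m * u + m * v + (θ⁻¹ + q - m - 1) * w + θ + q - m - 1)) ^ k ∧
  v = (((θ⁻¹ + m - 1) * u + (θ + m - 1) * v + (q - m) * w + (q - m)) /
      (m * u + m * v + (θ⁻¹ + q - m - 1) * w + θ + q - m - 1)) ^ k ∧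
  w = ((m * u + m * v + (θ + q - m - 1) * w + (θ⁻¹ + q - m - 1)) /
      (m * u + m * v + (θ⁻¹ + q - m - 1) * w + θ + q - m - 1)) ^ k

set_option maxHeartbeats 1000000 in
theorem stmt_4 (k q m₁ : ℕ) (hk : 2 ≤ k) (hq : 2 ≤ q) (hm1 : 1 ≤ m₁) (hm2 : m₁ ≤ q - 1)
    (θ u v w : ℝ) (hθ : 0 < θ) (hu : 0 < u) (hv : 0 < v) (hw : 0 < w)
    (h : IsingPottsSystem k (q : ℝ) θ (m₁ : ℝ) u v w) :
    IsingPottsSystem k (q : ℝ) θ ((q : ℝ) - (m₁ : ℝ)) (1 / u) (w / u) (v / u) := by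
  unfold IsingPottsSystem at h ⊢
  obtain ⟨h1, h2, h3⟩ := h
  have hu0 : u ≠ 0 := ne_of_gt hu
  have hθ0 : θ ≠ 0 := ne_of_gt hθ
  have hθi : 0 < θ⁻¹ := inv_pos.mpr hθ
  have hM1 : (1:ℝ) ≤ (m₁:ℝ) := by exact_mod_cast hm1
  have hMq : (m₁:ℝ) + 1 ≤ (q:ℝ) := by exact_mod_cast (by omega : m₁ + 1 ≤ q)
  set M := (m₁:ℝ) with hM
  set A := (θ + M - 1) * u + (θ⁻¹ + M - 1) * v + ((q:ℝ) - M) * w + ((q:ℝ) - M) with hA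
  set B := (θ⁻¹ + M - 1) * u + (θ + M - 1) * v + ((q:ℝ) - M) * w + ((q:ℝ) - M) with hB
  set C := M * u + M * v + (θ + (q:ℝ) - M - 1) * w + (θ⁻¹ + (q:ℝ) - M - 1) with hC
  set D := M * u + M * v + (θ⁻¹ + (q:ℝ) - M - 1) * w + θ + (q:ℝ) - M - 1 with hD
  have hApos : 0 < A := by
    have t1 : 0 < (θ + M - 1) * u := mul_pos (by linarith) hu
    have t2 : 0 < (θ⁻¹ + M - 1) * v := mul_pos (by linarith) hv
    have t3 : 0 < ((q:ℝ) - M) * w := mul_pos (by linarith) hw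
    rw [hA]; nlinarith
  have hDpos : 0 < D := by
    have t1 : 0 < M * u := mul_pos (by linarith) hu
    have t2 : 0 < M * v := mul_pos (by linarith) hv
    have t3 : 0 < (θ⁻¹ + (q:ℝ) - M - 1) * w := mul_pos (by linarith) hw
    rw [hD]; nlinarith
  have hA0 : A ≠ 0 := ne_of_gt hApos
  have hD0 : D ≠ 0 := ne_of_gt hDpos
  have hden : ((q:ℝ) - M) * (1 / u) + ((q:ℝ) - M) * (w / u) +
      (θ⁻¹ + (q:ℝ) - ((q:ℝ) - M) - 1) * (v / u) + θ + (q:ℝ) - ((q:ℝ) - M) - 1 = A / u := by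
    rw [hA]; field_simp; ring
  have hnum1 : (θ + ((q:ℝ) - M) - 1) * (1 / u) + (θ⁻¹ + ((q:ℝ) - M) - 1) * (w / u) +
      ((q:ℝ) - ((q:ℝ) - M)) * (v / u) + ((q:ℝ) - ((q:ℝ) - M)) = D / u := by
    rw [hD]; field_simp; ring
  have hnum2 : (θ⁻¹ + ((q:ℝ) - M) - 1) * (1 / u) + (θ + ((q:ℝ) - M) - 1) * (w / u) +
      ((q:ℝ) - ((q:ℝ) - M)) * (v / u) + ((q:ℝ) - ((q:ℝ) - M)) = C / u := by
    rw [hC]; field_simp; ring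
  have hnum3 : ((q:ℝ) - M) * (1 / u) + ((q:ℝ) - M) * (w / u) +
      (θ + (q:ℝ) - ((q:ℝ) - M) - 1) * (v / u) + (θ⁻¹ + (q:ℝ) - ((q:ℝ) - M) - 1) = B / u := by
    rw [hB]; field_simp; ring
  have hfrac : ∀ X : ℝ, X / u / (A / u) = X / A := fun X =>
    div_div_div_cancel_right₀ hu0 X A
  have hDA : (D / A) ^ k = 1 / u := by
    have : D / A = (A / D)⁻¹ := (inv_div A D).symm
    rw [this, inv_pow, ← h1, one_div]
  refine ⟨?_, ?_, ?_⟩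
  · rw [hnum1, hden, hfrac, hDA]
  · rw [hnum2, hden, hfrac]
    have : C / A = (C / D) * (D / A) := by field_simp
    rw [this, mul_pow, ← h3, hDA]
    ring
  · rw [hnum3, hden, hfrac]
    have : B / A = (B / D) * (D / A) := by field_simp
    rw [this, mul_pow, ← h2, hDA]
    ring
end

section
/- Let q, θ > 1 with q ≥ 2. The 2q×2q matrix P = [[θE+I, θ^{-1}E+I],[θ^{-1}E+I, θE+I]] (block form with q×q blocks, E the identity and I the all-ones-off-diagonal matrix with zero diagonal) has exactly three distinct eigenvalues: θ + θ^{-1} + 2(q-1) with multiplicity 1, θ - θ^{-1} with multiplicity q, and θ + θ^{-1} - 2 with multiplicity q - 1. -/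
open Module Matrix

section Aux
variable {V : Type*} [AddCommGroup V] [Module ℝ V] [FiniteDimensional ℝ V]

lemma aux_sup_finrank (f : Module.End ℝ V) {a b c : ℝ} (hab : a ≠ b) (hac : a ≠ c) (hbc : b ≠ c) :
    finrank ℝ ↥(f.eigenspace a ⊔ f.eigenspace b ⊔ f.eigenspace c) =
      finrank ℝ ↥(f.eigenspace a) + finrank ℝ ↥(f.eigenspace b) + finrank ℝ ↥(f.eigenspace c) := by
  have h := f.eigenspaces_iSupIndep
  have dab : Disjoint (f.eigenspace a) (f.eigenspace b) := h.pairwiseDisjoint hab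
  have dc : Disjoint (f.eigenspace c) (f.eigenspace a ⊔ f.eigenspace b) := by
    have := h.disjoint_biSup (x := c) (y := {a, b}) (by simp [hac.symm, hbc.symm, Ne])
    rwa [iSup_pair] at this
  have e1 := Submodule.finrank_sup_add_finrank_inf_eq (f.eigenspace a ⊔ f.eigenspace b)
    (f.eigenspace c)
  have e2 := Submodule.finrank_sup_add_finrank_inf_eq (f.eigenspace a) (f.eigenspace b)
  rw [dc.symm.eq_bot, finrank_bot, add_zero] at e1
  rw [dab.eq_bot, finrank_bot, add_zero] at e2
  omega

lemma aux_three_le (f : Module.End ℝ V) {a b c : ℝ} (hab : a ≠ b) (hac : a ≠ c) (hbc : b ≠ c) :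
    finrank ℝ ↥(f.eigenspace a) + finrank ℝ ↥(f.eigenspace b) + finrank ℝ ↥(f.eigenspace c)
      ≤ finrank ℝ V := by
  rw [← aux_sup_finrank f hab hac hbc]
  exact Submodule.finrank_le _

lemma aux_four_le (f : Module.End ℝ V) {a b c d : ℝ} (hab : a ≠ b) (hac : a ≠ c) (hbc : b ≠ c)
    (had : a ≠ d) (hbd : b ≠ d) (hcd : c ≠ d) :
    finrank ℝ ↥(f.eigenspace a) + finrank ℝ ↥(f.eigenspace b) + finrank ℝ ↥(f.eigenspace c)
      + finrank ℝ ↥(f.eigenspace d) ≤ finrank ℝ V := by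
  have h := f.eigenspaces_iSupIndep
  have dd : Disjoint (f.eigenspace d) (f.eigenspace a ⊔ f.eigenspace b ⊔ f.eigenspace c) := by
    have h2 := h.disjoint_biSup (x := d) (y := {a, b, c})
      (by simp [had.symm, hbd.symm, hcd.symm, Ne])
    rw [show (⨆ i ∈ ({a, b, c} : Set ℝ), f.eigenspace i)
        = f.eigenspace a ⊔ (f.eigenspace b ⊔ f.eigenspace c) by rw [iSup_insert, iSup_pair],
      ← sup_assoc] at h2
    exact h2
  have := Submodule.finrank_add_finrank_le_of_disjoint dd.symm
  rw [aux_sup_finrank f hab hac hbc] at this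
  omega

lemma aux_one_le (f : Module.End ℝ V) {μ : ℝ} (h : f.eigenspace μ ≠ ⊥) :
    1 ≤ finrank ℝ ↥(f.eigenspace μ) :=
  Nat.one_le_iff_ne_zero.mpr fun h0 => h (Submodule.finrank_eq_zero.mp h0)

end Aux


theorem stmt_12 (q : ℕ) (hq : 2 ≤ q) (θ : ℝ) (hθ : 1 < θ) :
    let J : Matrix (Fin q) (Fin q) ℝ := fun i j => if i = j then 0 else 1
    let A : Matrix (Fin q) (Fin q) ℝ := θ • (1 : Matrix (Fin q) (Fin q) ℝ) + J
    let B : Matrix (Fin q) (Fin q) ℝ := θ⁻¹ • (1 : Matrix (Fin q) (Fin q) ℝ) + J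
    let P : Matrix (Fin q ⊕ Fin q) (Fin q ⊕ Fin q) ℝ := Matrix.fromBlocks A B B A
    (spectrum ℝ P = {θ + θ⁻¹ + 2 * ((q : ℝ) - 1), θ - θ⁻¹, θ + θ⁻¹ - 2}) ∧
    (θ + θ⁻¹ + 2 * ((q : ℝ) - 1) ≠ θ - θ⁻¹) ∧
    (θ + θ⁻¹ + 2 * ((q : ℝ) - 1) ≠ θ + θ⁻¹ - 2) ∧
    (θ - θ⁻¹ ≠ θ + θ⁻¹ - 2) ∧
    Module.finrank ℝ
      ↥(Module.End.eigenspace (Matrix.toLin' P) (θ + θ⁻¹ + 2 * ((q : ℝ) - 1))) = 1 ∧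
    Module.finrank ℝ ↥(Module.End.eigenspace (Matrix.toLin' P) (θ - θ⁻¹)) = q ∧
    Module.finrank ℝ ↥(Module.End.eigenspace (Matrix.toLin' P) (θ + θ⁻¹ - 2)) = q - 1 := by
  intro J A B P
  have hθ0 : (0:ℝ) < θ := lt_trans one_pos hθ
  have hι0 : (0:ℝ) < θ⁻¹ := inv_pos.mpr hθ0
  have hι1 : θ⁻¹ < 1 := by rw [inv_lt_one_iff₀]; right; exact hθ
  have hq2 : (2:ℝ) ≤ (q:ℝ) := by exact_mod_cast hq
  have hqR0 : (q:ℝ) ≠ 0 := by intro h; rw [h] at hq2; norm_num at hq2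
  set l1 : ℝ := θ + θ⁻¹ + 2 * ((q : ℝ) - 1) with hl1
  set l2 : ℝ := θ - θ⁻¹ with hl2
  set l3 : ℝ := θ + θ⁻¹ - 2 with hl3
  have h12 : l1 ≠ l2 := by rw [hl1, hl2]; intro h; nlinarith
  have h13 : l1 ≠ l3 := by rw [hl1, hl3]; intro h; nlinarith
  have h23 : l2 ≠ l3 := by rw [hl2, hl3]; intro h; nlinarith
  -- basic computations
  have hJ : ∀ x : Fin q → ℝ, J *ᵥ x = fun i => (∑ j, x j) - x i := by
    intro x; funext i
    have key : ∀ j, (if i = j then (0:ℝ) else 1) * x j = x j - (if i = j then x j else 0) := by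
      intro j; split <;> ring
    simp only [Matrix.mulVec, dotProduct, J, key, Finset.sum_sub_distrib,
      Finset.sum_ite_eq, Finset.mem_univ, if_true]
  have hA : ∀ x : Fin q → ℝ, A *ᵥ x = fun i => θ * x i + ((∑ j, x j) - x i) := by
    intro x; funext i
    show ((θ • (1 : Matrix (Fin q) (Fin q) ℝ) + J) *ᵥ x) i = _
    rw [Matrix.add_mulVec, Matrix.smul_mulVec, Matrix.one_mulVec, hJ]
    simp
  have hB : ∀ x : Fin q → ℝ, B *ᵥ x = fun i => θ⁻¹ * x i + ((∑ j, x j) - x i) := by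
    intro x; funext i
    show ((θ⁻¹ • (1 : Matrix (Fin q) (Fin q) ℝ) + J) *ᵥ x) i = _
    rw [Matrix.add_mulVec, Matrix.smul_mulVec, Matrix.one_mulVec, hJ]
    simp
  have hPv : ∀ x y : Fin q → ℝ, P *ᵥ Sum.elim x y = Sum.elim (A *ᵥ x + B *ᵥ y) (B *ᵥ x + A *ᵥ y) := by
    intro x y
    show Matrix.fromBlocks A B B A *ᵥ Sum.elim x y = _
    rw [Matrix.fromBlocks_mulVec, Sum.elim_comp_inl, Sum.elim_comp_inr]
  have mem_es : ∀ (μ : ℝ) (v : Fin q ⊕ Fin q → ℝ), P *ᵥ v = μ • v →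
      v ∈ Module.End.eigenspace (Matrix.toLin' P) μ := by
    intro μ v hv
    rw [Module.End.mem_eigenspace_iff, Matrix.toLin'_apply, hv]
  -- eigenvectors
  have mem1 : Sum.elim (fun _ => (1:ℝ)) (fun _ => (1:ℝ)) ∈
      Module.End.eigenspace (Matrix.toLin' P) l1 := by
    apply mem_es
    rw [hPv, hl1]
    funext i
    cases i <;>
      simp [hA, hB, Finset.sum_const, Finset.card_univ] <;> ring
  have mem2 : ∀ x : Fin q → ℝ, Sum.elim x (-x) ∈
      Module.End.eigenspace (Matrix.toLin' P) l2 := by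
    intro x
    apply mem_es
    rw [hPv, hl2]
    funext i
    cases i <;>
      simp [hA, hB, Finset.sum_neg_distrib] <;> ring
  have mem3 : ∀ x : Fin q → ℝ, (∑ j, x j) = 0 → Sum.elim x x ∈
      Module.End.eigenspace (Matrix.toLin' P) l3 := by
    intro x hx
    apply mem_es
    rw [hPv, hl3]
    funext i
    cases i <;>
      simp [hA, hB, hx] <;> ring
  -- index elements
  have hq0 : 0 < q := by omega
  let i0 : Fin q := ⟨0, by omega⟩
  let i1 : Fin q := ⟨1, by omega⟩
  have hi01 : i0 ≠ i1 := by simp [i0, i1, Fin.ext_iff]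
  -- lower bound for l1
  have hd1 : 1 ≤ finrank ℝ ↥(Module.End.eigenspace (Matrix.toLin' P) l1) := by
    apply aux_one_le
    intro hbot
    have h0 := hbot ▸ mem1
    rw [Submodule.mem_bot] at h0
    have := congrFun h0 (Sum.inl i0)
    norm_num at this
  -- lower bound for l2
  let g2 : (Fin q → ℝ) →ₗ[ℝ] (Fin q ⊕ Fin q → ℝ) :=
    { toFun := fun x => Sum.elim x (-x)
      map_add' := by intro a b; funext i; cases i <;> (simp; try ring)
      map_smul' := by intro c a; funext i; cases i <;> (simp; try ring) }
  have hd2 : q ≤ finrank ℝ ↥(Module.End.eigenspace (Matrix.toLin' P) l2) := by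
    have hinj : Function.Injective
        (g2.codRestrict (Module.End.eigenspace (Matrix.toLin' P) l2) mem2) := by
      intro x y hxy
      have h' : Sum.elim x (-x) = Sum.elim y (-y) := congrArg Subtype.val hxy
      funext i
      exact congrFun h' (Sum.inl i)
    have := LinearMap.finrank_le_finrank_of_injective hinj
    rwa [Module.finrank_fintype_fun_eq_card, Fintype.card_fin] at this
  -- lower bound for l3
  let sl : (Fin q → ℝ) →ₗ[ℝ] ℝ :=
    { toFun := fun x => ∑ j, x j
      map_add' := by intro a b; simp [Finset.sum_add_distrib]
      map_smul' := by intro c a; simp [Finset.mul_sum] }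
  have hker : finrank ℝ ↥(LinearMap.ker sl) = q - 1 := by
    have hsurj : LinearMap.range sl = ⊤ := by
      rw [LinearMap.range_eq_top]
      intro r
      refine ⟨fun _ => r / q, ?_⟩
      show (∑ _j : Fin q, r / (q:ℝ)) = r
      rw [Finset.sum_const, Finset.card_univ, Fintype.card_fin, nsmul_eq_mul]
      field_simp
    have h := LinearMap.finrank_range_add_finrank_ker sl
    rw [hsurj, finrank_top, finrank_self, Module.finrank_fintype_fun_eq_card,
      Fintype.card_fin] at h
    omega
  let g3 : (Fin q → ℝ) →ₗ[ℝ] (Fin q ⊕ Fin q → ℝ) :=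
    { toFun := fun x => Sum.elim x x
      map_add' := by intro a b; funext i; cases i <;> simp
      map_smul' := by intro c a; funext i; cases i <;> simp }
  have hd3 : q - 1 ≤ finrank ℝ ↥(Module.End.eigenspace (Matrix.toLin' P) l3) := by
    have hinj : Function.Injective
        ((g3.comp (LinearMap.ker sl).subtype).codRestrict
          (Module.End.eigenspace (Matrix.toLin' P) l3) (fun x => mem3 x x.2)) := by
      intro x y hxy
      have h' : Sum.elim (x : Fin q → ℝ) (x : Fin q → ℝ) = Sum.elim (y : Fin q → ℝ) y :=
        congrArg Subtype.val hxy
      ext i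
      exact congrFun h' (Sum.inl i)
    have := LinearMap.finrank_le_finrank_of_injective hinj
    rwa [hker] at this
  -- total dimension
  have htot := aux_three_le (Matrix.toLin' P) h12 h13 h23
  rw [Module.finrank_fintype_fun_eq_card, Fintype.card_sum, Fintype.card_fin] at htot
  refine ⟨?_, h12, h13, h23, by omega, by omega, by omega⟩
  -- spectrum
  have hspec : spectrum ℝ P = spectrum ℝ (Matrix.toLin' P) :=
    (AlgEquiv.spectrum_eq Matrix.toLinAlgEquiv' P).symm
  rw [hspec]
  ext μ
  simp only [Set.mem_insert_iff, Set.mem_singleton_iff]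
  constructor
  · intro hμ
    have he : Module.End.HasEigenvalue (Matrix.toLin' P) μ :=
      Module.End.hasEigenvalue_iff_mem_spectrum.mpr hμ
    by_contra hne
    push_neg at hne
    obtain ⟨hn1, hn2, hn3⟩ := hne
    have hdm : 1 ≤ finrank ℝ ↥(Module.End.eigenspace (Matrix.toLin' P) μ) :=
      aux_one_le _ (Module.End.hasEigenvalue_iff.mp he)
    have h4 := aux_four_le (Matrix.toLin' P) h12 h13 h23
      (Ne.symm hn1) (Ne.symm hn2) (Ne.symm hn3)
    rw [Module.finrank_fintype_fun_eq_card, Fintype.card_sum, Fintype.card_fin] at h4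
    omega
  · intro hμ
    rw [← Module.End.hasEigenvalue_iff_mem_spectrum]
    rcases hμ with rfl | rfl | rfl
    · refine Module.End.hasEigenvalue_of_hasEigenvector ⟨mem1, ?_⟩
      intro h
      have := congrFun h (Sum.inl i0)
      norm_num at this
    · refine Module.End.hasEigenvalue_of_hasEigenvector ⟨mem2 (fun _ => 1), ?_⟩
      intro h
      have := congrFun h (Sum.inl i0)
      norm_num at this
    · refine Module.End.hasEigenvalue_of_hasEigenvector
        ⟨mem3 (Pi.single i0 1 - Pi.single i1 1) ?_, ?_⟩
      · simp [Finset.sum_sub_distrib, Finset.sum_pi_single]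
      · intro h
        have := congrFun h (Sum.inl i0)
        simp [Pi.single_apply, hi01, Ne.symm hi01] at this
end

section
/- Let a > 0 with a ≠ 1. Then sup over x,y,z,t ≥ 0 (not all zero in the relevant denominators) of |ax/(z+t+ax+a^{-1}y) - x/(x+y+bz+b^{-1}t)| equals |a-1|/(a+1), where b ∈ {a, a^{-1}}. -/
private lemma aux_ineq (a c x w s u : ℝ) (ha : 0 < a) (hc : 0 < c) (hac : a * c = 1)
    (hx : 0 ≤ x) (hw : 0 ≤ w) (hs : 0 ≤ s) (hu : 0 ≤ u) :
    (a + 1) ^ 2 * x * w ≤ (w + a * x + s + u) * (x + a * w + c * s + u) := by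
  nlinarith [mul_nonneg ha.le (sq_nonneg (w - x)), mul_nonneg (mul_nonneg hc.le hw) hs,
    mul_nonneg hx hs, mul_nonneg (mul_nonneg ha.le hw) hs,
    mul_nonneg (mul_nonneg hc.le hs) hs, mul_nonneg hx hu, mul_nonneg hw hu,
    mul_nonneg hs hu, mul_nonneg hu hu, mul_nonneg (mul_nonneg ha.le hx) hu,
    mul_nonneg (mul_nonneg ha.le hw) hu, mul_nonneg (mul_nonneg hc.le hs) hu]

private lemma aux_bound (a x w D1 D2 : ℝ) (ha : 0 < a) (hx : 0 ≤ x) (hw : 0 ≤ w)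
    (hD1 : 0 < D1) (hD2 : 0 < D2) (hkey : (a + 1) ^ 2 * x * w ≤ D1 * D2)
    (hid : a * x * D2 - x * D1 = x * (a ^ 2 - 1) * w) :
    |a * x / D1 - x / D2| ≤ |a - 1| / (a + 1) := by
  rw [div_sub_div _ _ hD1.ne' hD2.ne', show a * x * D2 - D1 * x = x*(a^2-1)*w by linarith [hid], abs_div]
  have ha1 : (0 : ℝ) < a + 1 := by linarith
  have h1 : |x * (a ^ 2 - 1) * w| = |a - 1| * (a + 1) * (x * w) := by
    rw [abs_mul, abs_mul, abs_of_nonneg hx, abs_of_nonneg hw]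
    have h2 : a ^ 2 - 1 = (a - 1) * (a + 1) := by ring
    rw [h2, abs_mul, abs_of_pos ha1]; ring
  rw [h1, abs_of_pos (mul_pos hD1 hD2),
    div_le_div_iff₀ (mul_pos hD1 hD2) ha1]
  nlinarith [mul_le_mul_of_nonneg_left hkey (abs_nonneg (a - 1))]

theorem stmt_18 (a b : ℝ) (ha : 0 < a) (ha1 : a ≠ 1) (hb : b = a ∨ b = a⁻¹) :
    IsLUB {r : ℝ | ∃ x y z t : ℝ, 0 ≤ x ∧ 0 ≤ y ∧ 0 ≤ z ∧ 0 ≤ t ∧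
        0 < z + t + a * x + a⁻¹ * y ∧ 0 < x + y + b * z + b⁻¹ * t ∧
        r = |a * x / (z + t + a * x + a⁻¹ * y) - x / (x + y + b * z + b⁻¹ * t)|}
      (|a - 1| / (a + 1)) := by
  have hc : 0 < a⁻¹ := inv_pos.mpr ha
  have hac : a * a⁻¹ = 1 := mul_inv_cancel₀ ha.ne'
  have ha1' : (0 : ℝ) < 1 + a := by linarith
  constructor
  · rintro r ⟨x, y, z, t, hx, hy, hz, ht, hD1, hD2, rfl⟩
    rcases hb with h | h
    · -- b = a
      rw [h] at hD2 ⊢ -- w = z + a⁻¹*y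
      have e1 : z + t + a * x + a⁻¹ * y = (z + a⁻¹ * y) + a * x + t + 0 := by ring
      have e2 : x + y + a * z + a⁻¹ * t = x + a * (z + a⁻¹ * y) + a⁻¹ * t + 0 := by
        linear_combination (-y) * hac
      apply aux_bound a x (z + a⁻¹ * y) _ _ ha hx (by positivity) hD1 hD2
      · rw [e1, e2]
        exact aux_ineq a a⁻¹ x (z + a⁻¹ * y) t 0 ha hc hac hx (by positivity) ht le_rfl
      · field_simp; ring
    · -- b = a⁻¹; w = t + a⁻¹*y
      rw [h, inv_inv] at hD2 ⊢
      have e1 : z + t + a * x + a⁻¹ * y = (t + a⁻¹ * y) + a * x + z + 0 := by ring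
      have e2 : x + y + a⁻¹ * z + a * t = x + a * (t + a⁻¹ * y) + a⁻¹ * z + 0 := by
        linear_combination (-y) * hac
      apply aux_bound a x (t + a⁻¹ * y) _ _ ha hx (by positivity) hD1 hD2
      · rw [e1, e2]
        exact aux_ineq a a⁻¹ x (t + a⁻¹ * y) z 0 ha hc hac hx (by positivity) hz le_rfl
      · field_simp; ring
  · intro r hr
    have hval : |a - 1| / (a + 1) = |a * 1 / (1 + a) - 1 / (1 + a)| := by
      rw [mul_one, div_sub_div_same, abs_div, abs_of_pos ha1']
      ring_nf
    rcases hb with h | h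
    · refine le_trans (le_of_eq hval) (hr ⟨1, 0, 1, 0, by norm_num, le_rfl, by norm_num,
        le_rfl, by norm_num; linarith, ?_, ?_⟩)
      · rw [h]; norm_num; linarith
      · rw [h]; norm_num
    · refine le_trans (le_of_eq hval) (hr ⟨1, 0, 0, 1, by norm_num, le_rfl, le_rfl,
        by norm_num, by norm_num; linarith, ?_, ?_⟩)
      · rw [h, inv_inv]; norm_num; linarith
      · rw [h, inv_inv]; norm_num
end
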